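/- For all Ising spin variables x1, x2, x3 ∈ {−1,1} and every real constant M ≥ 1, the minimum over auxiliary spin variables y, d ∈ {−1,1} of the expression y·x3 + M·P(x1,x2,y,d), where P(x1,x2,y,d) := 4 + x1 + x2 − y − 2d + x1·x2 − x1·y − x2·y − 2·x1·d − 2·x2·d + 2·y·d, equals the cubic monomial x1·x2·x3. -/

import Mathlib

/-! The penalty `P` is nonnegative on spins, vanishes at `y = x1 * x2` (with `d = max x1 x2`) and is
at least `2` whenever `y ≠ x1 * x2`. So the correct auxiliary spin attains `x1 * x2 * x3`, while a
wrong one costs at least `-1 + 2 * M ≥ 1 ≥ x1 * x2 * x3`. -/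

def IsSpin (s : ℝ) : Prop := s = -1 ∨ s = 1

namespace IsSpin

variable {s t : ℝ}

theorem mul (hs : IsSpin s) (ht : IsSpin t) : IsSpin (s * t) := by
  rcases hs with rfl | rfl <;> rcases ht with rfl | rfl <;> norm_num [IsSpin]

theorem max (hs : IsSpin s) (ht : IsSpin t) : IsSpin (max s t) := by
  rcases hs with rfl | rfl <;> rcases ht with rfl | rfl <;> norm_num [IsSpin]

theorem abs_eq_one (hs : IsSpin s) : |s| = 1 := by
  rcases hs with rfl | rfl <;> norm_num

theorem eq_neg_of_ne (hs : IsSpin s) (ht : IsSpin t) (hst : s ≠ t) : s = -t := by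
  rcases hs with rfl | rfl <;> rcases ht with rfl | rfl <;> revert hst <;> norm_num

end IsSpin

def isingPenalty (x1 x2 y d : ℝ) : ℝ :=
  4 + x1 + x2 - y - 2 * d + x1 * x2 - x1 * y - x2 * y - 2 * x1 * d - 2 * x2 * d + 2 * y * d

section isingPenalty

variable {x1 x2 y d : ℝ}

theorem isingPenalty_nonneg (hx1 : IsSpin x1) (hx2 : IsSpin x2) (hy : IsSpin y) (hd : IsSpin d) :
    0 ≤ isingPenalty x1 x2 y d := by
  rcases hx1 with rfl | rfl <;> rcases hx2 with rfl | rfl <;> rcases hy with rfl | rfl <;>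
    rcases hd with rfl | rfl <;> norm_num [isingPenalty]

theorem isingPenalty_mul_max (hx1 : IsSpin x1) (hx2 : IsSpin x2) :
    isingPenalty x1 x2 (x1 * x2) (max x1 x2) = 0 := by
  rcases hx1 with rfl | rfl <;> rcases hx2 with rfl | rfl <;> norm_num [isingPenalty]

theorem two_le_isingPenalty_neg_mul (hx1 : IsSpin x1) (hx2 : IsSpin x2) (hd : IsSpin d) :
    2 ≤ isingPenalty x1 x2 (-(x1 * x2)) d := by
  rcases hx1 with rfl | rfl <;> rcases hx2 with rfl | rfl <;> rcases hd with rfl | rfl <;>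
    norm_num [isingPenalty]

theorem mul_mul_le_add_mul_isingPenalty {x3 M : ℝ} (hx1 : IsSpin x1) (hx2 : IsSpin x2)
    (hx3 : IsSpin x3) (hy : IsSpin y) (hd : IsSpin d) (hM : 1 ≤ M) :
    x1 * x2 * x3 ≤ y * x3 + M * isingPenalty x1 x2 y d := by
  by_cases hxy : y = x1 * x2
  · subst hxy
    have := isingPenalty_nonneg hx1 hx2 hy hd
    nlinarith
  · obtain rfl := hy.eq_neg_of_ne (hx1.mul hx2) hxy
    have hP := two_le_isingPenalty_neg_mul hx1 hx2 hd
    have hbound : |x1 * x2 * x3| ≤ 1 := by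
      rw [abs_mul, abs_mul, hx1.abs_eq_one, hx2.abs_eq_one, hx3.abs_eq_one]; norm_num
    have := abs_le.mp hbound
    nlinarith

end isingPenalty

/-- Ising quadratization of a cubic spin monomial: for spins
`x1, x2, x3 ∈ {−1,1}` and any penalty constant `M ≥ 1`, the minimum over
auxiliary spins `y, d ∈ {−1,1}` of
`y*x3 + M*(4 + x1 + x2 - y - 2*d + x1*x2 - x1*y - x2*y - 2*x1*d - 2*x2*d + 2*y*d)`
equals `x1*x2*x3`. -/
theorem ising_cubic_quadratization
    (x1 x2 x3 M : ℝ)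
    (hx1 : x1 = -1 ∨ x1 = 1) (hx2 : x2 = -1 ∨ x2 = 1) (hx3 : x3 = -1 ∨ x3 = 1)
    (hM : 1 ≤ M) :
    IsLeast
      {v : ℝ | ∃ y d : ℝ, (y = -1 ∨ y = 1) ∧ (d = -1 ∨ d = 1) ∧
        v = y * x3 + M * (4 + x1 + x2 - y - 2 * d + x1 * x2 - x1 * y - x2 * y
              - 2 * x1 * d - 2 * x2 * d + 2 * y * d)}
      (x1 * x2 * x3) := by
  constructor
  · refine ⟨x1 * x2, max x1 x2, IsSpin.mul hx1 hx2, IsSpin.max hx1 hx2, ?_⟩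
    change _ = _ * x3 + M * isingPenalty x1 x2 _ _
    rw [isingPenalty_mul_max hx1 hx2]
    ring
  · rintro v ⟨y, d, hy, hd, rfl⟩
    exact mul_mul_le_add_mul_isingPenalty hx1 hx2 hx3 hy hd hM
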